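/- Every ring R contains the complete graph K_{χ(R)} as a minor; that is, there exist χ(R) pairwise disjoint nonempty subsets of V(R), each inducing a connected subgraph, with at least one edge of R between every two of them. -/

import Mathlib

open SimpleGraph

/-- The closed neighborhood `N_G[v]` of a vertex `v`. -/
def closedNbhd {V : Type} (G : SimpleGraph V) (v : V) : Set V :=
  insert v (G.neighborSet v)

/-- `X` (indexed cyclically by `ZMod k`) is a ring partition of `G`:
a partition into `k` nonempty sets, each of which can be ordered so that the
closed neighborhoods are nested, with the last one covering `X i` and the first
one being exactly `X (i-1) ∪ X i ∪ X (i+1)`. -/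
def IsRingPartition {V : Type} (G : SimpleGraph V) (k : ℕ) (X : ZMod k → Set V) : Prop :=
  (∀ i, (X i).Nonempty) ∧
  (∀ v : V, ∃! i, v ∈ X i) ∧
  ∀ i, ∃ (m : ℕ) (hm : 0 < m) (u : Fin m → V),
    Function.Injective u ∧
    Set.range u = X i ∧
    (∀ j j' : Fin m, j ≤ j' → closedNbhd G (u j') ⊆ closedNbhd G (u j)) ∧
    X i ⊆ closedNbhd G (u ⟨m - 1, by omega⟩) ∧
    closedNbhd G (u ⟨0, hm⟩) = X (i - 1) ∪ X i ∪ X (i + 1)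

/-- `G` is a `k`-ring. -/
def IsRing {V : Type} (G : SimpleGraph V) (k : ℕ) : Prop :=
  ∃ X : ZMod k → Set V, IsRingPartition G k X

/-- `X` is a hyperhole partition of `G`: a partition into `k` nonempty cliques,
each complete to the two neighboring cliques and anticomplete to all remaining
vertices. -/
def IsHyperholePartition {V : Type} (G : SimpleGraph V) (k : ℕ) (X : ZMod k → Set V) : Prop :=
  (∀ i, (X i).Nonempty) ∧
  (∀ v : V, ∃! i, v ∈ X i) ∧
  (∀ i, G.IsClique (X i)) ∧
  (∀ i, ∀ x ∈ X i, ∀ y ∈ X (i - 1) ∪ X (i + 1), G.Adj x y) ∧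
  (∀ i, ∀ x ∈ X i, ∀ y, y ∉ X (i - 1) ∪ X i ∪ X (i + 1) → ¬ G.Adj x y)

/-- `G` is a `k`-hyperhole. -/
def IsHyperhole {V : Type} (G : SimpleGraph V) (k : ℕ) : Prop :=
  ∃ X : ZMod k → Set V, IsHyperholePartition G k X

/-- `X` is a hyperantihole partition of `G`: a partition into `k` nonempty cliques,
each complete to all vertices outside the two neighboring cliques (and itself),
and anticomplete to the two neighboring cliques. -/
def IsHyperantiholePartition {V : Type} (G : SimpleGraph V) (k : ℕ) (X : ZMod k → Set V) : Prop :=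
  (∀ i, (X i).Nonempty) ∧
  (∀ v : V, ∃! i, v ∈ X i) ∧
  (∀ i, G.IsClique (X i)) ∧
  (∀ i, ∀ x ∈ X i, ∀ y, y ∉ X (i - 1) ∪ X i ∪ X (i + 1) → G.Adj x y) ∧
  (∀ i, ∀ x ∈ X i, ∀ y ∈ X (i - 1) ∪ X (i + 1), ¬ G.Adj x y)

/-- `G` is a `k`-hyperantihole. -/
def IsHyperantihole {V : Type} (G : SimpleGraph V) (k : ℕ) : Prop :=
  ∃ X : ZMod k → Set V, IsHyperantiholePartition G k X

/-- A vertex is simplicial if its neighborhood is a clique. -/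
def IsSimplicial {V : Type} (G : SimpleGraph V) (v : V) : Prop :=
  G.IsClique (G.neighborSet v)

/-- A graph is perfect if every induced subgraph has chromatic number equal to
its clique number. -/
def IsPerfect {V : Type} (G : SimpleGraph V) : Prop :=
  ∀ S : Set V, (G.induce S).chromaticNumber = ((G.induce S).cliqueNum : ℕ∞)

/-- The function `f_k`: `⌊kn/(k-1)⌋` if `n ≡ 0, 1 (mod k-1)`, and `⌈kn/(k-1)⌉`
otherwise. -/
def ringF (k n : ℕ) : ℕ :=
  if n % (k - 1) ≤ 1 then k * n / (k - 1) else (k * n + (k - 2)) / (k - 1)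

/-- The function `g_k`: `⌊kn/(k-1)⌋` if `n mod (k-1) ∈ {0, …, (k-3)/2}`, and
`⌈kn/(k-1)⌉` if `n mod (k-1) ∈ {(k-1)/2, …, k-2}`. -/
def ringG (k n : ℕ) : ℕ :=
  if n % (k - 1) ≤ (k - 3) / 2 then k * n / (k - 1) else (k * n + (k - 2)) / (k - 1)

/-- The function `f_T`: `⌊5n/4⌋` if `n ≡ 0, 1 (mod 4)`, and `⌈5n/4⌉` if
`n ≡ 2, 3 (mod 4)`. -/
def fT (n : ℕ) : ℕ :=
  if n % 4 ≤ 1 then 5 * n / 4 else (5 * n + 3) / 4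

/-- `G` contains the complete graph `K_m` as a minor, witnessed by `m` pairwise
disjoint nonempty branch sets, each inducing a connected subgraph, with an edge
between every two of them. -/
def HasCompleteMinor {V : Type} (G : SimpleGraph V) (m : ℕ) : Prop :=
  ∃ S : Fin m → Set V,
    (∀ i, (S i).Nonempty) ∧
    (∀ i j, i ≠ j → Disjoint (S i) (S j)) ∧
    (∀ i, (G.induce (S i)).Connected) ∧
    (∀ i j, i ≠ j → ∃ x ∈ S i, ∃ y ∈ S j, G.Adj x y)

/-!
Fix `c` with `R` not `c`-colourable; we find a `K_{c+1}` minor by induction on the number of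
vertices, deleting only vertices other than the `u_i^1`, so that what remains is again a ring.
Let `ω` be the clique number. If `c < ω`, a clique does it. If deleting some vertex keeps the
graph non-`c`-colourable, use induction. Otherwise put `e = c + 1 - ω ≥ 1`: we show that every
block `X_i` has at least `e` vertices and that its first `e` vertices are complete to
`X_{i-1} ∪ X_{i+1}`. For `e = 1` this is the defining property of `u_i^1`. For `e ≥ 2` no
block is a singleton (else there is an explicit `(ω + 1)`-colouring), and the last vertex of `X_i`
has degree at least `c`; its neighbours in `X_{i±1}` together with `X_i` form a clique, so it sees
at least `e` vertices on either side, and the nesting of neighbourhoods propagates this to all of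
`X_i`. Finally a maximum clique lies in two consecutive blocks `X_{i0} ∪ X_{i0+1}`; its `ω`
vertices and the `e` paths `u_{i0+2}^y, …, u_{i0-1}^y` (`1 ≤ y ≤ e`) are the branch sets of a
`K_{ω+e}` minor.
-/

theorem ZMod.val_add_one_of_add_one_ne_zero {k : ℕ} [NeZero k] {a : ZMod k} (h : a + 1 ≠ 0) :
    (a + 1).val = a.val + 1 := by
  have hcast : a + 1 = ((a.val + 1 : ℕ) : ZMod k) := by push_cast [ZMod.natCast_zmod_val]; rfl
  rw [hcast, ZMod.val_natCast, Nat.mod_eq_of_lt]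
  refine lt_of_le_of_ne (ZMod.val_lt a) fun hk => h ?_
  rw [hcast, hk, ZMod.natCast_self]

theorem ZMod.natCast_ne_zero_of_pos_of_lt {k n : ℕ} (h0 : 0 < n) (hn : n < k) :
    (n : ZMod k) ≠ 0 := fun h =>
  absurd (Nat.le_of_dvd h0 ((ZMod.natCast_eq_zero_iff n k).1 h)) (not_le.2 hn)

namespace SimpleGraph

variable {V W : Type} {G : SimpleGraph V} {H : SimpleGraph W}

theorem connected_induce_range (f : H →g G) (hH : H.Connected) :
    (G.induce (Set.range f)).Connected :=
  hH.map ⟨Set.rangeFactorization f, f.map_adj⟩ Set.rangeFactorization_surjective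

theorem Connected.induce_image (f : H →g G) {s : Set W} (hs : (H.induce s).Connected) :
    (G.induce (f '' s)).Connected := by
  rw [Set.image_eq_range]
  exact connected_induce_range (f.comp (Embedding.induce s).toHom) hs

theorem connected_induce_singleton (v : V) : (G.induce {v}).Connected := by
  rw [induce_singleton_eq_top]
  exact connected_top

theorem connected_induce_range_of_adj_succ {n : ℕ} (f : Fin (n + 1) → V)
    (hf : ∀ r : Fin n, G.Adj (f r.castSucc) (f r.succ)) :
    (G.induce (Set.range f)).Connected := by
  refine connected_induce_range ⟨f, fun {a b} hab => ?_⟩ (pathGraph_connected n)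
  rcases pathGraph_adj.1 hab with h | h
  · convert hf ⟨a, by omega⟩ using 2 <;> ext <;> simp [h]
  · convert (hf ⟨b, by omega⟩).symm using 2 <;> ext <;> simp [h]

theorem le_degree_of_colorable_induce_compl {c : ℕ} {x : V} [Fintype (G.neighborSet x)]
    (hx : (G.induce {x}ᶜ).Colorable c) (hG : ¬ G.Colorable c) : c ≤ G.degree x := by
  classical
  obtain ⟨ψ⟩ := hx
  have hsurj : Function.Surjective fun v : G.neighborSet x => ψ ⟨v, v.2.ne'⟩ := by
    intro a
    by_contra! hmiss
    refine hG ⟨Coloring.mk (fun v => if h : v = x then a else ψ ⟨v, h⟩)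
      fun {v w} hvw => ?_⟩
    by_cases hv : v = x <;> by_cases hw : w = x
    · exact absurd (hv.trans hw.symm) hvw.ne
    · subst hv
      simpa [hw] using (hmiss ⟨w, hvw⟩).symm
    · subst hw
      simpa [hv] using hmiss ⟨v, hvw.symm⟩
    · simpa [hv, hw] using ψ.valid (show (G.induce {x}ᶜ).Adj ⟨v, hv⟩ ⟨w, hw⟩ from hvw)
  have := Fintype.card_le_of_surjective _ hsurj
  rwa [Fintype.card_fin, card_neighborSet_eq_degree] at this

end SimpleGraph

section CompleteMinor

open Function

variable {V W : Type} {G : SimpleGraph V} {H : SimpleGraph W}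

theorem hasCompleteMinor_of_branchSets {ι : Type*} [Fintype ι] (S : ι → Set V)
    (hne : ∀ i, (S i).Nonempty) (hdisj : Pairwise (Disjoint on S))
    (hconn : ∀ i, (G.induce (S i)).Connected)
    (hadj : Pairwise fun i j => ∃ x ∈ S i, ∃ y ∈ S j, G.Adj x y) :
    HasCompleteMinor G (Fintype.card ι) := by
  let e := Fintype.equivFin ι
  exact ⟨S ∘ e.symm, fun i => hne _, fun i j hij => hdisj (e.symm.injective.ne hij),
    fun i => hconn _, fun i j hij => hadj (e.symm.injective.ne hij)⟩

theorem HasCompleteMinor.map {n : ℕ} (f : H ↪g G) (h : HasCompleteMinor H n) :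
    HasCompleteMinor G n := by
  obtain ⟨S, hne, hdisj, hconn, hadj⟩ := h
  refine ⟨fun i => f '' S i, fun i => (hne i).image f,
    fun i j hij => (Set.disjoint_image_iff f.injective).2 (hdisj i j hij),
    fun i => (hconn i).induce_image f.toHom, fun i j hij => ?_⟩
  obtain ⟨x, hx, y, hy, hxy⟩ := hadj i j hij
  exact ⟨f x, Set.mem_image_of_mem f hx, f y, Set.mem_image_of_mem f hy, f.map_adj_iff.2 hxy⟩

theorem hasCompleteMinor_completeGraph (n : ℕ) : HasCompleteMinor (completeGraph (Fin n)) n :=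
  ⟨fun i => {i}, fun _ => Set.singleton_nonempty _,
    fun _ _ hij => Set.disjoint_singleton.2 hij, fun _ => connected_induce_singleton _,
    fun i j hij => ⟨i, rfl, j, rfl, hij⟩⟩

theorem hasCompleteMinor_of_not_cliqueFree {n : ℕ} (h : ¬ G.CliqueFree n) :
    HasCompleteMinor G n :=
  (hasCompleteMinor_completeGraph n).map (topEmbeddingOfNotCliqueFree h)

theorem exists_chromaticNumber_eq_and_hasCompleteMinor [Fintype V]
    (h : ∀ c, ¬ G.Colorable c → HasCompleteMinor G (c + 1)) :
    ∃ n : ℕ, G.chromaticNumber = n ∧ HasCompleteMinor G n := by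
  obtain ⟨n, hn⟩ := ENat.ne_top_iff_exists.1
    (chromaticNumber_ne_top_iff_exists.2 ⟨_, G.colorable_of_fintype⟩)
  refine ⟨n, hn.symm, ?_⟩
  rcases n with _ | c
  · exact ⟨Fin.elim0, fun i => i.elim0, fun i => i.elim0, fun i => i.elim0, fun i => i.elim0⟩
  · refine h c fun hc => ?_
    have := hc.chromaticNumber_le
    rw [← hn] at this
    exact absurd this (by norm_cast; omega)

end CompleteMinor

/-- The blocks of the ring are `X i = {v | blk v = i}`, and `key` orders each block as in the
definition of a ring, the vertices of key `0` playing the role of the `u_i^1`. Keys need not be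
consecutive, so that deleting vertices of nonzero key leaves a `RingDecomposition` (`induce`). -/
structure RingDecomposition {V : Type} (G : SimpleGraph V) (k : ℕ) where
  blk : V → ZMod k
  key : V → ℕ
  eq_of_key_eq {v w : V} : blk v = blk w → key v = key w → v = w
  adj_of_blk_eq {v w : V} : blk v = blk w → v ≠ w → G.Adj v w
  blk_eq_of_adj {v w : V} : G.Adj v w → blk w = blk v - 1 ∨ blk w = blk v ∨ blk w = blk v + 1
  adj_of_key_le {v w x : V} :
    blk v = blk w → key v ≤ key w → G.Adj w x → v ≠ x → G.Adj v x
  exists_key_eq_zero (i : ZMod k) : ∃ v, blk v = i ∧ key v = 0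
  adj_of_key_eq_zero {v w : V} : key v = 0 → blk w = blk v + 1 ∨ blk v = blk w + 1 → G.Adj v w

namespace RingDecomposition

open Finset

variable {V : Type} {G : SimpleGraph V} {k : ℕ} (D : RingDecomposition G k)

theorem nontrivial_zmod (D : RingDecomposition G k) : Nontrivial (ZMod k) := by
  refine ZMod.nontrivial_iff.2 fun hk => ?_
  subst hk
  obtain ⟨v, -, hv⟩ := D.exists_key_eq_zero 0
  exact G.loopless.irrefl v (D.adj_of_key_eq_zero hv (Or.inl (Subsingleton.elim _ _)))

theorem adj_of_key_le_of_key_le {v w x y : V} (hvw : G.Adj v w) (hb : D.blk v ≠ D.blk w)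
    (hx : D.blk x = D.blk v) (hxv : D.key x ≤ D.key v)
    (hy : D.blk y = D.blk w) (hyw : D.key y ≤ D.key w) : G.Adj x y := by
  have hxw : G.Adj x w := D.adj_of_key_le hx hxv hvw fun h => hb (hx ▸ h ▸ rfl)
  exact (D.adj_of_key_le hy hyw hxw.symm fun h => hb (hx ▸ hy ▸ h ▸ rfl)).symm

def induce (S : Set V) (hS : ∀ v, D.key v = 0 → v ∈ S) :
    RingDecomposition (G.induce S) k where
  blk v := D.blk v
  key v := D.key v
  eq_of_key_eq h h' := Subtype.ext (D.eq_of_key_eq h h')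
  adj_of_blk_eq h hne := D.adj_of_blk_eq h (Subtype.coe_injective.ne hne)
  blk_eq_of_adj h := D.blk_eq_of_adj h
  adj_of_key_le h h' hadj hne := D.adj_of_key_le h h' hadj (Subtype.coe_injective.ne hne)
  exists_key_eq_zero i :=
    let ⟨v, hv, h0⟩ := D.exists_key_eq_zero i
    ⟨⟨v, hS v h0⟩, hv, h0⟩
  adj_of_key_eq_zero h h' := D.adj_of_key_eq_zero h h'

section Finite

variable [Fintype V] {v w : V}

def block (i : ZMod k) : Finset V := {v | D.blk v = i}

def rank (v : V) : ℕ := #{w ∈ D.block (D.blk v) | D.key w < D.key v}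

@[simp] theorem mem_block {i : ZMod k} : v ∈ D.block i ↔ D.blk v = i := by simp [block]

theorem rank_lt_rank (h : D.blk v = D.blk w) (hkey : D.key v < D.key w) : D.rank v < D.rank w := by
  unfold rank
  rw [h]
  refine card_lt_card ⟨fun u hu => ?_, fun hsub => ?_⟩
  · simp only [mem_filter] at hu ⊢
    exact ⟨hu.1, by omega⟩
  · simpa using hsub (mem_filter.2 ⟨D.mem_block.2 h, hkey⟩)

theorem eq_of_rank_eq (h : D.blk v = D.blk w) (hr : D.rank v = D.rank w) : v = w := by
  refine D.eq_of_key_eq h (le_antisymm ?_ ?_) <;> by_contra! hlt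
  · exact (D.rank_lt_rank h.symm hlt).ne hr.symm
  · exact (D.rank_lt_rank h hlt).ne hr

theorem rank_lt_card_block (v : V) : D.rank v < #(D.block (D.blk v)) :=
  card_lt_card (filter_ssubset.2 ⟨v, D.mem_block.2 rfl, lt_irrefl _⟩)

theorem exists_rank_eq {i : ZMod k} {y : ℕ} (hy : y < #(D.block i)) :
    ∃ v, D.blk v = i ∧ D.rank v = y := by
  obtain ⟨v, hv, hvy⟩ := surj_on_of_inj_on_of_card_le (s := D.block i) (t := range #(D.block i))
    (fun v _ => D.rank v)
    (fun v hv => mem_range.2 (D.mem_block.1 hv ▸ D.rank_lt_card_block v))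
    (fun v w hv hw hr => D.eq_of_rank_eq ((D.mem_block.1 hv).trans (D.mem_block.1 hw).symm) hr)
    (by simp) y (mem_range.2 hy)
  exact ⟨v, D.mem_block.1 hv, hvy.symm⟩

theorem card_le_rank {A : Finset V} (hA : ∀ a ∈ A, D.blk a = D.blk v)
    (hdown : ∀ a ∈ A, D.key v ≤ D.key a → v ∈ A) (hv : v ∉ A) : #A ≤ D.rank v :=
  card_le_card fun a ha => mem_filter.2
    ⟨D.mem_block.2 (hA a ha), lt_of_not_ge fun hle => hv (hdown a ha hle)⟩

theorem key_eq_zero_of_rank_eq_zero (h : D.rank v = 0) : D.key v = 0 := by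
  obtain ⟨u, hu, hu0⟩ := D.exists_key_eq_zero (D.blk v)
  by_contra hv
  have := D.rank_lt_rank hu (by omega)
  omega

theorem card_filter_key_le (v : V) :
    #{w ∈ D.block (D.blk v) | D.key w ≤ D.key v} = D.rank v + 1 := by
  classical
  have : {w ∈ D.block (D.blk v) | D.key w ≤ D.key v} =
      insert v {w ∈ D.block (D.blk v) | D.key w < D.key v} := by
    ext w
    simp only [mem_filter, mem_insert, mem_block]
    constructor
    · rintro ⟨hw, hle⟩
      rcases hle.lt_or_eq with hlt | heq
      · exact Or.inr ⟨hw, hlt⟩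
      · exact Or.inl (D.eq_of_key_eq hw heq)
    · rintro (rfl | ⟨hw, hlt⟩)
      · exact ⟨rfl, le_rfl⟩
      · exact ⟨hw, hlt.le⟩
  rw [this, card_insert_of_notMem (by simp), rank]

theorem isClique_block (i : ZMod k) : G.IsClique (D.block i : Set V) := fun _ hv _ hw hvw =>
  D.adj_of_blk_eq ((D.mem_block.1 hv).trans (D.mem_block.1 hw).symm) hvw

theorem rank_lt_cliqueNum (v : V) : D.rank v < G.cliqueNum :=
  (D.rank_lt_card_block v).trans_le (D.isClique_block _).card_le_cliqueNum

theorem rank_add_rank_add_two_le (hvw : G.Adj v w) (hb : D.blk w = D.blk v + 1) :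
    D.rank v + D.rank w + 2 ≤ G.cliqueNum := by
  classical
  have := D.nontrivial_zmod
  have hne : D.blk v ≠ D.blk w := by rw [hb]; exact (add_ne_left.2 one_ne_zero).symm
  set Cv := {x ∈ D.block (D.blk v) | D.key x ≤ D.key v}
  set Cw := {y ∈ D.block (D.blk w) | D.key y ≤ D.key w}
  have hdisj : Disjoint Cv Cw := disjoint_left.2 fun x hx hx' => hne <| by
    simp only [Cv, Cw, mem_filter, mem_block] at hx hx'
    rw [← hx.1, hx'.1]
  have hclique : G.IsClique ((Cv ∪ Cw : Finset V) : Set V) := by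
    have cross : ∀ x ∈ Cv, ∀ y ∈ Cw, G.Adj x y := fun x hx y hy => by
      simp only [Cv, Cw, mem_filter, mem_block] at hx hy
      exact D.adj_of_key_le_of_key_le hvw hne hx.1 hx.2 hy.1 hy.2
    intro x hx y hy hxy
    simp only [coe_union, Set.mem_union, mem_coe] at hx hy
    rcases hx with hx | hx <;> rcases hy with hy | hy
    · exact D.isClique_block _ (filter_subset _ _ hx) (filter_subset _ _ hy) hxy
    · exact cross x hx y hy
    · exact (cross y hy x hx).symm
    · exact D.isClique_block _ (filter_subset _ _ hx) (filter_subset _ _ hy) hxy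
  have := hclique.card_le_cliqueNum
  rw [card_union_of_disjoint hdisj, D.card_filter_key_le, D.card_filter_key_le] at this
  omega

theorem exists_forall_blk_eq_or_eq_add_one (hk : 4 ≤ k) {C : Finset V}
    (hC : G.IsClique (C : Set V)) : ∃ i, ∀ x ∈ C, D.blk x = i ∨ D.blk x = i + 1 := by
  have near : ∀ u ∈ C, ∀ x ∈ C,
      D.blk x = D.blk u - 1 ∨ D.blk x = D.blk u ∨ D.blk x = D.blk u + 1 :=
    fun u hu x hx => (eq_or_ne u x).elim (fun h => Or.inr (Or.inl (h ▸ rfl)))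
      fun h => D.blk_eq_of_adj (hC hu hx h)
  by_cases hsame : ∀ u ∈ C, ∀ x ∈ C, D.blk x = D.blk u
  · rcases C.eq_empty_or_nonempty with rfl | ⟨u, hu⟩
    · exact ⟨0, by simp⟩
    · exact ⟨D.blk u, fun x hx => Or.inl (hsame u hu x hx)⟩
  push Not at hsame
  obtain ⟨a, ha, b, hb, hab⟩ : ∃ a ∈ C, ∃ b ∈ C, D.blk b = D.blk a + 1 := by
    obtain ⟨u, hu, x, hx, hux⟩ := hsame
    rcases near u hu x hx with h | h | h
    · exact ⟨x, hx, u, hu, by rw [h]; ring⟩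
    · exact absurd h hux
    · exact ⟨u, hu, x, hx, h⟩
  refine ⟨D.blk a, fun x hx => ?_⟩
  rcases near a ha x hx with h1 | h1 | h1
  · exfalso
    rcases near b hb x hx with h2 | h2 | h2 <;> rw [h1, hab] at h2
    · exact ZMod.natCast_ne_zero_of_pos_of_lt (k := k) (n := 1) one_pos (by omega)
        (by push_cast; linear_combination -h2)
    · exact ZMod.natCast_ne_zero_of_pos_of_lt (k := k) (n := 2) two_pos (by omega)
        (by push_cast; linear_combination -h2)
    · exact ZMod.natCast_ne_zero_of_pos_of_lt (k := k) (n := 3) three_pos (by omega)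
        (by push_cast; linear_combination -h2)
  · exact Or.inl h1
  · exact Or.inr h1

/-- Used when block `i0` is a singleton. Adjacent vertices of consecutive blocks have ranks summing
to at most `cliqueNum - 2`, so `rank` and `cliqueNum - 1 - rank` never clash across them. -/
noncomputable def blockColor (i0 : ZMod k) (v : V) : ℕ :=
  if D.blk v = i0 then G.cliqueNum
  else if Odd (D.blk v - i0).val then D.rank v else G.cliqueNum - 1 - D.rank v

theorem blockColor_lt {i0 : ZMod k} (hv : D.blk v ≠ i0) : D.blockColor i0 v < G.cliqueNum := by
  have := D.rank_lt_cliqueNum v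
  simp only [blockColor, if_neg hv]
  split_ifs <;> omega

theorem blockColor_ne_of_blk_eq_add_one [NeZero k] {i0 : ZMod k} (hvw : G.Adj v w)
    (hb : D.blk w = D.blk v + 1) : D.blockColor i0 v ≠ D.blockColor i0 w := by
  have := D.nontrivial_zmod
  have hr := D.rank_add_rank_add_two_le hvw hb
  by_cases hv : D.blk v = i0
  · have := D.blockColor_lt (i0 := i0) (v := w) (by rw [hb, hv]; exact add_ne_left.2 one_ne_zero)
    rw [blockColor, if_pos hv]
    omega
  by_cases hw : D.blk w = i0
  · have hcw : D.blockColor i0 w = G.cliqueNum := if_pos hw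
    have := D.blockColor_lt hv
    omega
  have hsucc : D.blk w - i0 = (D.blk v - i0) + 1 := by rw [hb]; ring
  have hval : (D.blk w - i0).val = (D.blk v - i0).val + 1 := by
    rw [hsucc, ZMod.val_add_one_of_add_one_ne_zero (hsucc ▸ sub_ne_zero.2 hw)]
  simp only [blockColor, if_neg hv, if_neg hw, hval, Nat.odd_add_one]
  split_ifs <;> omega

theorem colorable_cliqueNum_add_one_of_card_block_eq_one [NeZero k] {i0 : ZMod k}
    (hi0 : #(D.block i0) = 1) : G.Colorable (G.cliqueNum + 1) := by
  refine (colorable_iff_exists_bdd_nat_coloring _).2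
    ⟨Coloring.mk (D.blockColor i0) fun {v w} hvw => ?_, fun v => ?_⟩
  · rcases D.blk_eq_of_adj hvw with h | h | h
    · exact (D.blockColor_ne_of_blk_eq_add_one hvw.symm (by rw [h]; ring)).symm
    · by_cases hv : D.blk v = i0
      · exact absurd (card_le_one.1 hi0.le v (D.mem_block.2 hv) w (D.mem_block.2 (h.trans hv)))
          hvw.ne
      · have hrank : D.rank v ≠ D.rank w := fun hr => hvw.ne (D.eq_of_rank_eq h.symm hr)
        have := D.rank_lt_cliqueNum v
        have := D.rank_lt_cliqueNum w
        simp only [blockColor, h, if_neg hv]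
        split_ifs <;> omega
    · exact D.blockColor_ne_of_blk_eq_add_one hvw h
  · show D.blockColor i0 v < G.cliqueNum + 1
    by_cases hv : D.blk v = i0
    · exact (if_pos hv).trans_lt (Nat.lt_succ_self _)
    · exact (D.blockColor_lt hv).trans (Nat.lt_succ_self _)

structure IsBand (e : ℕ) : Prop where
  le_card_block (i : ZMod k) : e ≤ #(D.block i)
  adj {v w : V} : D.blk w = D.blk v + 1 → D.rank v < e ∨ D.rank w < e → G.Adj v w

theorem isBand_one : D.IsBand 1 where
  le_card_block i :=
    let ⟨v, hv, _⟩ := D.exists_key_eq_zero i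
    card_pos.2 ⟨v, D.mem_block.2 hv⟩
  adj hb h := by
    rcases h with h | h
    · exact D.adj_of_key_eq_zero (D.key_eq_zero_of_rank_eq_zero (Nat.lt_one_iff.1 h)) (Or.inl hb)
    · exact (D.adj_of_key_eq_zero (D.key_eq_zero_of_rank_eq_zero (Nat.lt_one_iff.1 h))
        (Or.inr hb)).symm

theorem card_block_add_card_filter_adj_le [DecidableRel G.Adj] {w0 : V} {i : ZMod k}
    (hmax : ∀ x ∈ D.block (D.blk w0), D.key x ≤ D.key w0) (hi : i ≠ D.blk w0) :
    #(D.block (D.blk w0)) + #{v ∈ D.block i | G.Adj w0 v} ≤ G.cliqueNum := by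
  classical
  set N := {v ∈ D.block i | G.Adj w0 v}
  have cross : ∀ x ∈ D.block (D.blk w0), ∀ y ∈ N, G.Adj x y := fun x hx y hy => by
    rw [mem_filter, mem_block] at hy
    exact D.adj_of_key_le (D.mem_block.1 hx) (hmax x hx) hy.2
      fun h => hi (hy.1 ▸ h ▸ D.mem_block.1 hx)
  have hclique : G.IsClique ((D.block (D.blk w0) ∪ N : Finset V) : Set V) := by
    intro x hx y hy hxy
    simp only [coe_union, Set.mem_union, mem_coe] at hx hy
    rcases hx with hx | hx <;> rcases hy with hy | hy
    · exact D.isClique_block _ hx hy hxy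
    · exact cross x hx y hy
    · exact (cross y hy x hx).symm
    · exact D.isClique_block _ (filter_subset _ _ hx) (filter_subset _ _ hy) hxy
  have hdisj : Disjoint (D.block (D.blk w0)) N := disjoint_left.2 fun x hx hx' =>
    hi ((D.mem_block.1 (filter_subset _ _ hx')).symm.trans (D.mem_block.1 hx))
  rw [← card_union_of_disjoint hdisj]
  exact hclique.card_le_cliqueNum

theorem le_card_block_and_adj_of_critical {c e : ℕ} (hG : ¬ G.Colorable c)
    (hdel : ∀ x, D.key x ≠ 0 → (G.induce {x}ᶜ).Colorable c) (hce : c + 1 = G.cliqueNum + e)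
    {j j' : ZMod k} (hj : 2 ≤ #(D.block j)) (hj' : j' = j - 1 ∨ j' = j + 1) :
    e ≤ #(D.block j') ∧
      ∀ ⦃v w⦄, D.blk v = j' → D.rank v < e → D.blk w = j → G.Adj v w := by
  classical
  have := D.nontrivial_zmod
  obtain ⟨w0, hw0, hmax⟩ := exists_max_image (D.block j) D.key (card_pos.1 (by omega))
  rw [mem_block] at hw0
  subst hw0
  have hw0key : D.key w0 ≠ 0 := fun h0 => by
    obtain ⟨u, hu, huw⟩ := exists_mem_ne hj w0
    exact huw (D.eq_of_key_eq (D.mem_block.1 hu) (by have := hmax u hu; omega))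
  set N : ZMod k → Finset V := fun i => {v ∈ D.block i | G.Adj w0 v}
  have hsub : G.neighborFinset w0 ⊆ (D.block (D.blk w0)).erase w0 ∪ N (D.blk w0 - 1) ∪
      N (D.blk w0 + 1) := fun v hv => by
    rw [mem_neighborFinset] at hv
    rcases D.blk_eq_of_adj hv with h | h | h <;> simp [N, h, hv, hv.ne']
  have hdeg : c ≤ #(D.block (D.blk w0)) - 1 + #(N (D.blk w0 - 1)) + #(N (D.blk w0 + 1)) :=
    calc c ≤ G.degree w0 := le_degree_of_colorable_induce_compl (hdel w0 hw0key) hG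
      _ ≤ _ := (card_le_card hsub).trans <| (card_union_le _ _).trans <|
          add_le_add_left ((card_union_le _ _).trans_eq (by rw [card_erase_of_mem (by simp)])) _
  have hleft : #(D.block (D.blk w0)) + #(N (D.blk w0 - 1)) ≤ G.cliqueNum :=
    D.card_block_add_card_filter_adj_le hmax (mt sub_eq_self.1 one_ne_zero)
  have hright : #(D.block (D.blk w0)) + #(N (D.blk w0 + 1)) ≤ G.cliqueNum :=
    D.card_block_add_card_filter_adj_le hmax (add_ne_left.2 one_ne_zero)
  have hNe : e ≤ #(N j') := by rcases hj' with rfl | rfl <;> omega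
  have hj'ne : j' ≠ D.blk w0 := by
    rcases hj' with rfl | rfl
    exacts [mt sub_eq_self.1 one_ne_zero, add_ne_left.2 one_ne_zero]
  refine ⟨hNe.trans (card_le_card (filter_subset _ _)), fun v w hv hrank hw => ?_⟩
  have hvN : v ∈ N j' := by
    by_contra hvN
    refine absurd (D.card_le_rank (fun a ha => ?_) (fun a ha hle => ?_) hvN) (by omega)
    · rw [hv, ← D.mem_block]; exact filter_subset _ _ ha
    · simp only [N, mem_filter, mem_block] at ha ⊢
      exact ⟨hv, (D.adj_of_key_le (hv.trans ha.1.symm) hle ha.2.symm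
        fun h => hj'ne (hv ▸ h ▸ rfl)).symm⟩
  simp only [N, mem_filter] at hvN
  exact D.adj_of_key_le_of_key_le hvN.2.symm (hv ▸ hj'ne) rfl le_rfl hw
    (hmax w (D.mem_block.2 hw))

theorem isBand_of_critical [NeZero k] {c e : ℕ} (hG : ¬ G.Colorable c)
    (hdel : ∀ x, D.key x ≠ 0 → (G.induce {x}ᶜ).Colorable c) (hce : c + 1 = G.cliqueNum + e)
    (he : 2 ≤ e) : D.IsBand e := by
  have hblock : ∀ j, 2 ≤ #(D.block j) := fun j => by
    by_contra! h
    obtain ⟨v, hv, -⟩ := D.exists_key_eq_zero j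
    have h1 : #(D.block j) = 1 := le_antisymm (by omega) (card_pos.2 ⟨v, D.mem_block.2 hv⟩)
    exact hG ((D.colorable_cliqueNum_add_one_of_card_block_eq_one h1).mono (by omega))
  refine ⟨fun i => ?_, fun {v w} hb h => ?_⟩
  · simpa using (D.le_card_block_and_adj_of_critical hG hdel hce (hblock (i + 1)) (j' := i)
      (Or.inl (by ring))).1
  rcases h with h | h
  · exact (D.le_card_block_and_adj_of_critical hG hdel hce (hblock _)
      (Or.inl (by rw [hb]; ring))).2 rfl h rfl
  · exact ((D.le_card_block_and_adj_of_critical hG hdel hce (hblock _) (Or.inr hb)).2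
      rfl h rfl).symm

namespace IsBand

variable {D} {e : ℕ} (hD : D.IsBand e)

noncomputable def vertex (i : ZMod k) (y : Fin e) : V :=
  (D.exists_rank_eq (y.2.trans_le (hD.le_card_block i))).choose

theorem blk_vertex (i : ZMod k) (y : Fin e) : D.blk (hD.vertex i y) = i :=
  (D.exists_rank_eq (y.2.trans_le (hD.le_card_block i))).choose_spec.1

theorem rank_vertex (i : ZMod k) (y : Fin e) : D.rank (hD.vertex i y) = y :=
  (D.exists_rank_eq (y.2.trans_le (hD.le_card_block i))).choose_spec.2

def path (i0 : ZMod k) (y : Fin e) : Set V :=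
  Set.range fun r : Fin (k - 3 + 1) => hD.vertex (i0 + ((r : ℕ) + 2 : ℕ)) y

theorem rank_vertex_lt (i : ZMod k) (y : Fin e) : D.rank (hD.vertex i y) < e :=
  (hD.rank_vertex i y).trans_lt y.2

theorem vertex_mem_path (i0 : ZMod k) (y : Fin e) (r : Fin (k - 3 + 1)) :
    hD.vertex (i0 + ((r : ℕ) + 2 : ℕ)) y ∈ hD.path i0 y :=
  ⟨r, rfl⟩

theorem rank_of_mem_path {i0 : ZMod k} {y : Fin e} {v : V} (hv : v ∈ hD.path i0 y) :
    D.rank v = y := by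
  obtain ⟨r, rfl⟩ := hv
  exact hD.rank_vertex _ y

theorem blk_ne_of_mem_path (hk : 3 ≤ k) {i0 : ZMod k} {y : Fin e} {v : V}
    (hv : v ∈ hD.path i0 y) : D.blk v ≠ i0 ∧ D.blk v ≠ i0 + 1 := by
  obtain ⟨r, rfl⟩ := hv
  have hr := r.2
  rw [hD.blk_vertex]
  constructor
  · exact fun h => ZMod.natCast_ne_zero_of_pos_of_lt (k := k) (n := r + 2) (by omega) (by omega)
      (by simpa using h)
  · refine fun h =>
      ZMod.natCast_ne_zero_of_pos_of_lt (k := k) (n := r + 1) (by omega) (by omega) ?_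
    push_cast at h ⊢
    linear_combination h

theorem connected_induce_path (i0 : ZMod k) (y : Fin e) : (G.induce (hD.path i0 y)).Connected :=
  connected_induce_range_of_adj_succ _ fun r => hD.adj
    (by simp only [blk_vertex, Fin.val_castSucc, Fin.val_succ]; push_cast; ring)
    (Or.inl (hD.rank_vertex_lt _ y))

theorem exists_adj_mem_path (hk : 3 ≤ k) {i0 : ZMod k} (y : Fin e) {c : V}
    (hc : D.blk c = i0 ∨ D.blk c = i0 + 1) : ∃ v ∈ hD.path i0 y, G.Adj c v := by
  rcases hc with hc | hc
  · refine ⟨_, hD.vertex_mem_path i0 y (Fin.last _),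
      (hD.adj ?_ (Or.inl (hD.rank_vertex_lt _ y))).symm⟩
    rw [hc, blk_vertex, Fin.val_last, add_assoc, ← Nat.cast_one, ← Nat.cast_add,
      show k - 3 + 2 + 1 = k by omega, ZMod.natCast_self, add_zero]
  · refine ⟨_, hD.vertex_mem_path i0 y 0, hD.adj ?_ (Or.inr (hD.rank_vertex_lt _ y))⟩
    rw [hc, blk_vertex, Fin.val_zero]
    push_cast
    ring

theorem exists_adj_path_path (i0 : ZMod k) {y y' : Fin e} (hy : y ≠ y') :
    ∃ v ∈ hD.path i0 y, ∃ v' ∈ hD.path i0 y', G.Adj v v' :=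
  ⟨_, hD.vertex_mem_path i0 y 0, _, hD.vertex_mem_path i0 y' 0,
    D.adj_of_blk_eq (by rw [blk_vertex, blk_vertex])
      fun h => hy (Fin.ext (by rw [← hD.rank_vertex, h, hD.rank_vertex]))⟩

theorem hasCompleteMinor (hD : D.IsBand e) (hk : 4 ≤ k) :
    HasCompleteMinor G (G.cliqueNum + e) := by
  obtain ⟨C, hC⟩ := G.exists_isNClique_cliqueNum
  obtain ⟨i0, hi0⟩ := D.exists_forall_blk_eq_or_eq_add_one hk hC.isClique
  have hCpath : ∀ c ∈ C, ∀ y, c ∉ hD.path i0 y := fun c hc y hcy =>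
    (hi0 c hc).elim (hD.blk_ne_of_mem_path (by omega) hcy).1
      (hD.blk_ne_of_mem_path (by omega) hcy).2
  have hcard : Fintype.card (C ⊕ Fin e) = G.cliqueNum + e := by simp [hC.card_eq]
  rw [← hcard]
  refine hasCompleteMinor_of_branchSets (Sum.elim (fun c => {c.1}) (hD.path i0)) ?_ ?_ ?_ ?_
  · rintro (c | y)
    exacts [Set.singleton_nonempty _, Set.range_nonempty _]
  · rintro (c | y) (c' | y') h
    · exact Set.disjoint_singleton.2 (Subtype.coe_injective.ne fun h' => h (by rw [h']))
    · exact Set.disjoint_singleton_left.2 (hCpath c c.2 y')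
    · exact Set.disjoint_singleton_right.2 (hCpath c' c'.2 y)
    · exact Set.disjoint_left.2 fun v hv hv' => h (congrArg Sum.inr (Fin.ext
        ((hD.rank_of_mem_path hv).symm.trans (hD.rank_of_mem_path hv'))))
  · rintro (c | y)
    exacts [connected_induce_singleton _, hD.connected_induce_path i0 y]
  · rintro (c | y) (c' | y') h
    · exact ⟨c, rfl, c', rfl,
        hC.isClique c.2 c'.2 (Subtype.coe_injective.ne fun h' => h (by rw [h']))⟩
    · obtain ⟨v, hv, hcv⟩ := hD.exists_adj_mem_path (by omega) y' (hi0 c c.2)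
      exact ⟨c, rfl, v, hv, hcv⟩
    · obtain ⟨v, hv, hcv⟩ := hD.exists_adj_mem_path (by omega) y (hi0 c' c'.2)
      exact ⟨v, hv, c', rfl, hcv.symm⟩
    · exact hD.exists_adj_path_path i0 fun h' => h (by rw [h'])

end IsBand

theorem hasCompleteMinor_of_not_colorable (D : RingDecomposition G k) (hk : 4 ≤ k) {c : ℕ}
    (hc : ¬ G.Colorable c) : HasCompleteMinor G (c + 1) := by
  classical
  induction hn : Fintype.card V using Nat.strong_induction_on generalizing V with
  | _ n ih =>
  by_cases hω : c + 1 ≤ G.cliqueNum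
  · obtain ⟨s, hs⟩ := G.exists_isNClique_cliqueNum
    exact hasCompleteMinor_of_not_cliqueFree fun hfree => hs.not_cliqueFree (hfree.mono hω)
  by_cases hx : ∃ x, D.key x ≠ 0 ∧ ¬ (G.induce {x}ᶜ).Colorable c
  · obtain ⟨x, hx0, hxc⟩ := hx
    have hlt : Fintype.card ({x}ᶜ : Set V) < n :=
      hn ▸ Fintype.card_subtype_lt (p := (· ∈ ({x}ᶜ : Set V))) (x := x) (by simp)
    exact (ih _ hlt (D.induce {x}ᶜ fun v hv => by rintro rfl; exact hx0 hv) hxc rfl).map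
      (Embedding.induce _)
  push Not at hx
  have hce : c + 1 = G.cliqueNum + (c + 1 - G.cliqueNum) := by omega
  rw [hce]
  rcases (by omega : c + 1 - G.cliqueNum = 1 ∨ 2 ≤ c + 1 - G.cliqueNum) with he | he
  · rw [he]
    exact D.isBand_one.hasCompleteMinor hk
  · have : NeZero k := ⟨by omega⟩
    exact (D.isBand_of_critical hc hx hce he).hasCompleteMinor hk

end Finite

end RingDecomposition

theorem exists_coords_of_unique_mem_range {V ι : Type} {m : ι → ℕ} {X : ι → Set V}
    (u : ∀ i, Fin (m i) → V) (hinj : ∀ i, Function.Injective (u i))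
    (hrange : ∀ i, Set.range (u i) = X i) (huniq : ∀ v, ∃! i, v ∈ X i) :
    ∃ (blk : V → ι) (key : V → ℕ),
      (∀ i a, blk (u i a) = i ∧ key (u i a) = a) ∧ ∀ v, ∃ i a, u i a = v := by
  have hsurj : ∀ v, ∃ p : Σ i, Fin (m i), u p.1 p.2 = v := fun v => by
    obtain ⟨i, hi, -⟩ := huniq v
    rw [← hrange i] at hi
    obtain ⟨a, ha⟩ := hi
    exact ⟨⟨i, a⟩, ha⟩
  choose idx hidx using hsurj
  have hmem : ∀ i a, u i a ∈ X i := fun i a => hrange i ▸ ⟨a, rfl⟩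
  have hidx_u : ∀ i a, idx (u i a) = ⟨i, a⟩ := fun i a => by
    have h := hidx (u i a)
    rcases hp : idx (u i a) with ⟨j, b⟩
    rw [hp] at h
    obtain rfl : j = i := (huniq _).unique (h ▸ hmem j b) (hmem i a)
    obtain rfl : b = a := hinj j h
    rfl
  refine ⟨fun v => (idx v).1, fun v => (idx v).2, fun i a => ?_, fun v => ⟨_, _, hidx v⟩⟩
  dsimp only
  rw [hidx_u]
  exact ⟨rfl, rfl⟩

theorem IsRingPartition.nonempty_ringDecomposition {V : Type} {G : SimpleGraph V} {k : ℕ}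
    {X : ZMod k → Set V} (hX : IsRingPartition G k X) (hk : k ≠ 1) :
    Nonempty (RingDecomposition G k) := by
  have := ZMod.nontrivial_iff.2 hk
  obtain ⟨-, huniq, hstr⟩ := hX
  choose m hm u hinj hrange hnest hlast hhub using hstr
  obtain ⟨blk, key, hu, hcases⟩ := exists_coords_of_unique_mem_range u hinj hrange huniq
  have hmem : ∀ i a, u i a ∈ X i := fun i a => hrange i ▸ ⟨a, rfl⟩
  have hblk : ∀ {v i j}, v ∈ X i → v ∈ X j → i = j := fun hi hj => (huniq _).unique hi hj
  have hsub : ∀ i a, closedNbhd G (u i a) ⊆ X (i - 1) ∪ X i ∪ X (i + 1) := fun i a =>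
    hhub i ▸ hnest i _ a (Fin.le_def.2 (Nat.zero_le _))
  refine ⟨⟨blk, key, fun {v w} hb hkey => ?_, fun {v w} hb hne => ?_, fun {v w} hvw => ?_,
    fun {v w x} hb hle hwx hne => ?_, fun i => ⟨u i ⟨0, hm i⟩, (hu i _).1, (hu i _).2⟩,
    fun {v w} h0 hb => ?_⟩⟩ <;>
    obtain ⟨i, a, rfl⟩ := hcases v <;> obtain ⟨j, b, rfl⟩ := hcases w <;>
    simp only [hu] at *
  · subst hb
    rw [Fin.ext hkey]
  · subst hb
    have := hnest i b ⟨m i - 1, by have := hm i; omega⟩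
      (Fin.le_def.2 (Nat.le_sub_one_of_lt b.2)) (hlast i (hmem i a))
    exact (this.resolve_left hne).symm
  · rcases hsub i a (Or.inr hvw) with (h | h) | h
    exacts [Or.inl (hblk (hmem j b) h), Or.inr (Or.inl (hblk (hmem j b) h)),
      Or.inr (Or.inr (hblk (hmem j b) h))]
  · subst hb
    exact (hnest i a b (Fin.le_def.2 hle) (Or.inr hwx)).resolve_left (Ne.symm hne)
  · obtain rfl : a = ⟨0, hm i⟩ := Fin.ext h0
    have hw : u j b ∈ closedNbhd G (u i ⟨0, hm i⟩) := by
      rw [hhub i]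
      rcases hb with rfl | rfl
      · exact Or.inr (hmem _ b)
      · exact Or.inl (Or.inl (by rw [add_sub_cancel_right]; exact hmem j b))
    refine hw.resolve_left fun h => ?_
    have hji := hblk (hmem j b) (h ▸ hmem i _)
    rcases hb with rfl | rfl
    exacts [add_ne_left.2 one_ne_zero hji, add_ne_left.2 one_ne_zero hji.symm]

/-- Every ring `R` contains the complete graph `K_{χ(R)}` as a minor. -/
theorem ring_hasCompleteMinor_chromaticNumber {V : Type} [Fintype V]
    (R : SimpleGraph V) (hR : ∃ k, 4 ≤ k ∧ IsRing R k) :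
    ∃ n : ℕ, R.chromaticNumber = (n : ℕ∞) ∧ HasCompleteMinor R n := by
  obtain ⟨k, hk, X, hX⟩ := hR
  obtain ⟨D⟩ := hX.nonempty_ringDecomposition (by omega)
  exact exists_chromaticNumber_eq_and_hasCompleteMinor fun c hc =>
    D.hasCompleteMinor_of_not_colorable hk hc
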